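/- If 𝒞 is an LCD code of length n over R, then its Gray image Ψ(𝒞) is an LCD code of length 3n over F_q. -/

import Mathlib

open Polynomial

/-- The ring `R = F_q[v]/(v^3 - v)`. -/
noncomputable abbrev Rq (F : Type*) [Field F] : Type _ := AdjoinRoot (X ^ 3 - X : F[X])

/-- The image `v` of the indeterminate in `R = F_q[v]/(v^3 - v)`. -/
noncomputable abbrev vq (F : Type*) [Field F] : Rq F := AdjoinRoot.root _

/-- The Euclidean dual of a code: `C^⊥ = {x | ∀ y ∈ C, Σ xᵢyᵢ = 0}`. -/
def dualCode {S : Type*} [CommRing S] {ι : Type*} [Fintype ι]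
    (C : Submodule S (ι → S)) : Submodule S (ι → S) where
  carrier := {x | ∀ y ∈ C, ∑ i, x i * y i = 0}
  add_mem' := by
    intro a b ha hb y hy
    simp only [Set.mem_setOf_eq] at *
    simp [Pi.add_apply, add_mul, Finset.sum_add_distrib, ha y hy, hb y hy]
  zero_mem' := by intro y hy; simp
  smul_mem' := by
    intro c a ha y hy
    simp only [Set.mem_setOf_eq] at *
    simp [Pi.smul_apply, smul_eq_mul, mul_assoc, ← Finset.mul_sum, ha y hy]


/-!
The Gray map is coordinatewise evaluation of `R = F_q[v]/(v³ - v)` at the roots `0, 1, -1` of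
`v³ - v`, so the inner product of Gray images over `F_q` is the trace `Σₖ evₖ` of the inner
product over `R`. As `2` is invertible, this trace form on `R` is nondegenerate; since `𝒞` is
closed under multiplication by `R`, a codeword whose Gray image is orthogonal to `Ψ(𝒞)` is
orthogonal to `𝒞`, hence zero.
-/

lemma FiniteField.two_ne_zero_of_odd_card {F : Type*} [Field F] [Fintype F]
    (hodd : Odd (Fintype.card F)) : (2 : F) ≠ 0 :=
  Ring.two_ne_zero fun hchar => by
    have := FiniteField.even_card_of_char_two hchar
    rw [Nat.odd_iff] at hodd
    omega

section GrayMap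

variable {F : Type*} [Field F]

lemma vq_pow_three : vq F ^ 3 = vq F := by
  have h := AdjoinRoot.mk_self (f := (X ^ 3 - X : F[X]))
  rwa [map_sub, map_pow, AdjoinRoot.mk_X, sub_eq_zero] at h

lemma exists_eq_add_vq_mul_add_vq_sq_mul (r : Rq F) :
    ∃ a b c : F, r = algebraMap F (Rq F) a + vq F * algebraMap F (Rq F) b +
      vq F ^ 2 * algebraMap F (Rq F) c := by
  induction r using AdjoinRoot.induction_on with
  | ih p =>
    induction p using Polynomial.induction_on with
    | C a => exact ⟨a, 0, 0, by simp [AdjoinRoot.algebraMap_eq]⟩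
    | add p q hp hq =>
      obtain ⟨a, b, c, hp⟩ := hp
      obtain ⟨a', b', c', hq⟩ := hq
      refine ⟨a + a', b + b', c + c', ?_⟩
      rw [map_add, hp, hq]
      simp only [map_add]
      ring
    | monomial m a hm =>
      obtain ⟨a', b', c', hm⟩ := hm
      refine ⟨0, a' + c', b', ?_⟩
      rw [show C a * X ^ (m + 1) = C a * X ^ m * X by ring, map_mul, AdjoinRoot.mk_X, hm]
      simp only [map_add, map_zero]
      linear_combination algebraMap F (Rq F) c' * vq_pow_three (F := F)

/-- The roots `0, 1, -1` of `v ^ 3 - v`, in the order of the coordinates of the Gray map. -/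
def grayPoint (F : Type*) [Field F] : Fin 3 → F := ![0, 1, -1]

lemma grayPoint_isRoot (k : Fin 3) : (X ^ 3 - X : F[X]).IsRoot (grayPoint F k) := by
  fin_cases k <;> norm_num [grayPoint]

noncomputable def grayEval (k : Fin 3) : Rq F →ₐ[F] F :=
  AdjoinRoot.liftAlgHom _ (Algebra.ofId F F) (grayPoint F k) (grayPoint_isRoot k)

lemma grayEval_vq (k : Fin 3) : grayEval k (vq F) = grayPoint F k :=
  AdjoinRoot.liftAlgHom_root ..

lemma grayEval_add_vq_mul_add_vq_sq_mul (a b c : F) (k : Fin 3) :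
    grayEval k (algebraMap F (Rq F) a + vq F * algebraMap F (Rq F) b +
      vq F ^ 2 * algebraMap F (Rq F) c) = ![a, a + b + c, a - b + c] k := by
  simp only [map_add, map_mul, map_pow, AlgHom.commutes, grayEval_vq, Algebra.algebraMap_self,
    RingHom.id_apply]
  fin_cases k <;> simp [grayPoint]; ring

/-- Chinese remainder theorem for `v ^ 3 - v = v (v - 1) (v + 1)`. -/
lemma eq_zero_of_forall_grayEval_eq_zero (htwo : (2 : F) ≠ 0) {r : Rq F}
    (h : ∀ k, grayEval k r = 0) : r = 0 := by
  obtain ⟨a, b, c, rfl⟩ := exists_eq_add_vq_mul_add_vq_sq_mul r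
  have he0 := h 0
  have he1 := h 1
  have he2 := h 2
  simp only [grayEval_add_vq_mul_add_vq_sq_mul] at he0 he1 he2
  simp only [Fin.isValue, Matrix.cons_val_zero, Matrix.cons_val_one, Matrix.cons_val_two,
    Matrix.head_cons, Matrix.tail_cons] at he0 he1 he2
  have hb : 2 * b = 0 := by linear_combination he1 - he2
  have hc : 2 * c = 0 := by linear_combination he1 + he2 - 2 * he0
  simp [he0, (mul_eq_zero.1 hb).resolve_left htwo, (mul_eq_zero.1 hc).resolve_left htwo]

/-- Nondegeneracy of the trace form `(r, s) ↦ Σₖ grayEval k (r s)`: testing against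
`s = 1, v, v²` gives a Vandermonde system in the values `grayEval k r`. -/
lemma eq_zero_of_forall_sum_grayEval_mul_eq_zero (htwo : (2 : F) ≠ 0) {r : Rq F}
    (h : ∀ s, ∑ k, grayEval k (s * r) = 0) : r = 0 := by
  refine eq_zero_of_forall_grayEval_eq_zero htwo fun k => ?_
  have hv0 := h 1
  have hv1 := h (vq F)
  have hv2 := h (vq F ^ 2)
  simp only [map_mul, map_pow, map_one, grayEval_vq, Fin.sum_univ_three, grayPoint] at hv0 hv1 hv2
  simp only [Fin.isValue, Matrix.cons_val_zero, Matrix.cons_val_one, Matrix.cons_val_two,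
    Matrix.head_cons, Matrix.tail_cons] at hv0 hv1 hv2
  have hr1 : grayEval 1 r = 0 :=
    (mul_eq_zero.1 (by linear_combination hv1 + hv2)).resolve_left htwo
  have hr2 : grayEval 2 r = 0 :=
    (mul_eq_zero.1 (by linear_combination hv2 - hv1)).resolve_left htwo
  have hr0 : grayEval 0 r = 0 := by linear_combination hv0 - hr1 - hr2
  fin_cases k <;> assumption

variable {n : ℕ}

def IsGrayMap (Ψ : (Fin n → Rq F) →ₗ[F] (Fin n × Fin 3 → F)) : Prop :=
  ∀ a b c : Fin n → F,
    Ψ (fun i => algebraMap F (Rq F) (a i) + vq F * algebraMap F (Rq F) (b i) +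
        vq F ^ 2 * algebraMap F (Rq F) (c i)) =
      fun p => ![a p.1, a p.1 + b p.1 + c p.1, a p.1 - b p.1 + c p.1] p.2

variable {Ψ : (Fin n → Rq F) →ₗ[F] (Fin n × Fin 3 → F)}

lemma IsGrayMap.apply_eq (hΨ : IsGrayMap Ψ) (u : Fin n → Rq F) :
    Ψ u = fun p => grayEval p.2 (u p.1) := by
  choose a b c hu using fun i => exists_eq_add_vq_mul_add_vq_sq_mul (u i)
  rw [funext hu, hΨ]
  simp only [grayEval_add_vq_mul_add_vq_sq_mul]

lemma IsGrayMap.sum_apply_mul_apply (hΨ : IsGrayMap Ψ) (u w : Fin n → Rq F) :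
    ∑ p, Ψ u p * Ψ w p = ∑ k, grayEval k (∑ i, u i * w i) := by
  simp only [hΨ.apply_eq, map_sum, map_mul, Fintype.sum_prod_type]
  exact Finset.sum_comm

end GrayMap

/-- If `𝒞` is an LCD code of length `n` over `R = F_q[v]/(v^3 - v)`, then its Gray
image `Ψ(𝒞)` is an LCD code of length `3n` over `F_q`. -/
theorem stmt_7 (F : Type*) [Field F] [Fintype F] (hodd : Odd (Fintype.card F)) (n : ℕ)
    (𝒞 : Submodule (Rq F) (Fin n → Rq F)) (hLCD : 𝒞 ⊓ dualCode 𝒞 = ⊥)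
    (Ψ : (Fin n → Rq F) →ₗ[F] (Fin n × Fin 3 → F))
    (hΨ : ∀ a b c : Fin n → F,
      Ψ (fun i => algebraMap F (Rq F) (a i) + vq F * algebraMap F (Rq F) (b i) +
          vq F ^ 2 * algebraMap F (Rq F) (c i)) =
        fun p => ![a p.1, a p.1 + b p.1 + c p.1, a p.1 - b p.1 + c p.1] p.2)
 :
    Submodule.map Ψ (Submodule.restrictScalars F 𝒞) ⊓
      dualCode (Submodule.map Ψ (Submodule.restrictScalars F 𝒞)) = ⊥ := by
  have htwo := FiniteField.two_ne_zero_of_odd_card hodd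
  refine eq_bot_iff.2 fun x hx => ?_
  obtain ⟨⟨u, hu, rfl⟩, hperp⟩ := Submodule.mem_inf.1 hx
  have hu_dual : u ∈ dualCode 𝒞 := fun y hy =>
    eq_zero_of_forall_sum_grayEval_mul_eq_zero htwo fun s => by
      have := hperp (Ψ (s • y)) ⟨s • y, 𝒞.smul_mem s hy, rfl⟩
      simpa [IsGrayMap.sum_apply_mul_apply hΨ, Finset.mul_sum, mul_left_comm] using this
  have hu_inf : u ∈ 𝒞 ⊓ dualCode 𝒞 := ⟨hu, hu_dual⟩
  rw [hLCD, Submodule.mem_bot] at hu_inf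
  simp [hu_inf]
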